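/- Let ℓ : ℝ^{d×d'} → ℝ be differentiable, N ≥ 2 an integer, and let W, U, σ, V be a differentiable SVD path on an open interval I. Let t₀ ∈ I be such that: σ_r(t₀) ≠ 0 for every r; the product matrix obeys the deep-factorization dynamics at t₀, i.e. W′(t₀) = −T_N(U(t₀), σ(t₀), V(t₀), ∇ℓ(W(t₀))); and the singular vectors are stationary at t₀, i.e. U′(t₀) = 0 and V′(t₀) = 0. Then the k×k matrix U(t₀)ᵀ·∇ℓ(W(t₀))·V(t₀) is diagonal; that is, the singular vectors of the product matrix align with singular vectors of the gradient. -/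

import Mathlib

open Matrix

/-- `dpow σ β` is the `k×k` diagonal matrix with `r`-th diagonal entry `(σᵣ²)^β`
(real power, with the convention `x⁰ = 1`). -/
noncomputable def dpow {k : ℕ} (σ : Fin k → ℝ) (β : ℝ) : Matrix (Fin k) (Fin k) ℝ :=
  Matrix.diagonal (fun r => (σ r ^ 2) ^ β)

/-- `TN N U σ V M` is the right-hand side of the gradient-flow dynamics of the product
matrix of a depth-`N` matrix factorization with balanced initialization, expressed
through a singular value decomposition `W = U·diag(σ)·Vᵀ`. -/
noncomputable def TN {d d' k : ℕ} (N : ℕ) (U : Matrix (Fin d) (Fin k) ℝ)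
    (σ : Fin k → ℝ) (V : Matrix (Fin d') (Fin k) ℝ) (M : Matrix (Fin d) (Fin d') ℝ) :
    Matrix (Fin d) (Fin d') ℝ :=
  M * V * dpow σ (((N : ℝ) - 1) / N) * Vᵀ +
  (∑ j ∈ Finset.Icc 2 (N - 1),
    U * dpow σ (((j : ℝ) - 1) / N) * Uᵀ * M * V * dpow σ (((N : ℝ) - (j : ℝ)) / N) * Vᵀ) +
  U * dpow σ (((N : ℝ) - 1) / N) * Uᵀ * M

/-!
Differentiating `W = U·diag(σ)·Vᵀ` at `t₀`, where `U′ = V′ = 0`, gives `W′ = U·diag(σ′)·Vᵀ`, so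
`Uᵀ·W′·V = diag(σ′)` is diagonal. On the other hand, in the singular bases the dynamics act
entrywise: the `(r, r')` entry of `Uᵀ·T_N(U, σ, V, M)·V` is `(UᵀMV)_{rr'}` times the weight
`tnWeight N σ r r'`, a sum of powers of `σ_r²` and `σ_{r'}²` that is positive as soon as
`σ_r ≠ 0`. Comparing off-diagonal entries forces `(UᵀMV)_{rr'} = 0`.
-/

section EntrywiseDerivative

variable {m n o : Type*} {t : ℝ}

theorem hasDerivAt_matrix_mul_apply [Fintype n] {A : ℝ → Matrix m n ℝ} {B : ℝ → Matrix n o ℝ}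
    {A' : Matrix m n ℝ} {B' : Matrix n o ℝ}
    (hA : ∀ i j, HasDerivAt (fun s => A s i j) (A' i j) t)
    (hB : ∀ j k, HasDerivAt (fun s => B s j k) (B' j k) t) (i : m) (k : o) :
    HasDerivAt (fun s => (A s * B s) i k) ((A' * B t + A t * B') i k) t := by
  simp only [mul_apply, Matrix.add_apply, ← Finset.sum_add_distrib]
  exact HasDerivAt.fun_sum fun j _ => (hA i j).fun_mul (hB j k)

theorem hasDerivAt_diagonal_apply [DecidableEq n] {σ : ℝ → n → ℝ} {σ' : n → ℝ}
    (hσ : ∀ r, HasDerivAt (fun s => σ s r) (σ' r) t) (i j : n) :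
    HasDerivAt (fun s => diagonal (σ s) i j) (diagonal σ' i j) t := by
  by_cases hij : i = j
  · subst hij
    simpa only [diagonal_apply_eq] using hσ i
  · simpa only [diagonal_apply_ne _ hij] using hasDerivAt_const t (0 : ℝ)

theorem hasDerivAt_mul_diagonal_mul_transpose_apply [Fintype n] [DecidableEq n]
    {U : ℝ → Matrix m n ℝ} {σ : ℝ → n → ℝ} {V : ℝ → Matrix o n ℝ}
    {U' : Matrix m n ℝ} {σ' : n → ℝ} {V' : Matrix o n ℝ}
    (hU : ∀ p q, HasDerivAt (fun s => U s p q) (U' p q) t)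
    (hσ : ∀ r, HasDerivAt (fun s => σ s r) (σ' r) t)
    (hV : ∀ p q, HasDerivAt (fun s => V s p q) (V' p q) t) (p : m) (q : o) :
    HasDerivAt (fun s => (U s * diagonal (σ s) * (V s)ᵀ) p q)
      ((U' * diagonal (σ t) * (V t)ᵀ + U t * diagonal σ' * (V t)ᵀ
        + U t * diagonal (σ t) * V'ᵀ) p q) t := by
  have hUσ := hasDerivAt_matrix_mul_apply hU (hasDerivAt_diagonal_apply hσ)
  have hVt : ∀ j k, HasDerivAt (fun s => (V s)ᵀ j k) (V'ᵀ j k) t := fun j k => hV k j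
  simpa only [Matrix.add_mul] using hasDerivAt_matrix_mul_apply hUσ hVt p q

end EntrywiseDerivative

theorem transpose_mul_mul_mul_transpose_mul {R m n o : Type*} [Semiring R] [Fintype m]
    [Fintype n] [Fintype o] [DecidableEq n] {U : Matrix m n R} {V : Matrix o n R} (hU : Uᵀ * U = 1)
    (hV : Vᵀ * V = 1) (D : Matrix n n R) :
    Uᵀ * (U * D * Vᵀ) * V = D := by
  rw [Matrix.mul_assoc, Matrix.mul_assoc, hV, Matrix.mul_one, ← Matrix.mul_assoc, hU,
    Matrix.one_mul]

section SingularBasis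

variable {d d' k : ℕ} (N : ℕ) (σ : Fin k → ℝ)

noncomputable def tnWeight (r r' : Fin k) : ℝ :=
  (σ r' ^ 2) ^ (((N : ℝ) - 1) / N) +
  (∑ j ∈ Finset.Icc 2 (N - 1),
    (σ r ^ 2) ^ (((j : ℝ) - 1) / N) * (σ r' ^ 2) ^ (((N : ℝ) - (j : ℝ)) / N)) +
  (σ r ^ 2) ^ (((N : ℝ) - 1) / N)

theorem tnWeight_pos {r : Fin k} (hr : σ r ≠ 0) (r' : Fin k) : 0 < tnWeight N σ r r' := by
  unfold tnWeight
  positivity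

variable {N σ} {U : Matrix (Fin d) (Fin k) ℝ} {V : Matrix (Fin d') (Fin k) ℝ}

theorem transpose_mul_TN_mul (hU : Uᵀ * U = 1) (hV : Vᵀ * V = 1)
    (M : Matrix (Fin d) (Fin d') ℝ) :
    Uᵀ * TN N U σ V M * V =
      Uᵀ * M * V * dpow σ (((N : ℝ) - 1) / N) +
      (∑ j ∈ Finset.Icc 2 (N - 1),
        dpow σ (((j : ℝ) - 1) / N) * (Uᵀ * M * V) * dpow σ (((N : ℝ) - (j : ℝ)) / N)) +
      dpow σ (((N : ℝ) - 1) / N) * (Uᵀ * M * V) := by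
  simp only [TN, Matrix.mul_add, Matrix.add_mul, Matrix.mul_sum, Matrix.sum_mul,
    Matrix.mul_assoc, hV, Matrix.mul_one]
  simp only [← Matrix.mul_assoc Uᵀ U, hU, Matrix.one_mul]

theorem transpose_mul_TN_mul_apply (hU : Uᵀ * U = 1) (hV : Vᵀ * V = 1)
    (M : Matrix (Fin d) (Fin d') ℝ) (r r' : Fin k) :
    (Uᵀ * TN N U σ V M * V) r r' = (Uᵀ * M * V) r r' * tnWeight N σ r r' := by
  rw [transpose_mul_TN_mul hU hV, tnWeight]
  simp only [Matrix.add_apply, Matrix.sum_apply, dpow, mul_diagonal, diagonal_mul, mul_add,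
    Finset.mul_sum]
  ring_nf

end SingularBasis

theorem stmt14_general {d d' : ℕ} (N : ℕ)
    (gradℓ : Matrix (Fin d) (Fin d') ℝ → Matrix (Fin d) (Fin d') ℝ)
    (I : Set ℝ) (hI_open : IsOpen I)
    (W W' : ℝ → Matrix (Fin d) (Fin d') ℝ)
    (U U' : ℝ → Matrix (Fin d) (Fin (min d d')) ℝ)
    (σ σ' : ℝ → Fin (min d d') → ℝ)
    (V V' : ℝ → Matrix (Fin d') (Fin (min d d')) ℝ)
    (hW : ∀ t ∈ I, ∀ p q, HasDerivAt (fun s => W s p q) (W' t p q) t)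
    (hU : ∀ t ∈ I, ∀ p q, HasDerivAt (fun s => U s p q) (U' t p q) t)
    (hσ : ∀ t ∈ I, ∀ r, HasDerivAt (fun s => σ s r) (σ' t r) t)
    (hV : ∀ t ∈ I, ∀ p q, HasDerivAt (fun s => V s p q) (V' t p q) t)
    (hSVD : ∀ t ∈ I, W t = U t * Matrix.diagonal (σ t) * (V t)ᵀ)
    (hUorth : ∀ t ∈ I, (U t)ᵀ * U t = 1)
    (hVorth : ∀ t ∈ I, (V t)ᵀ * V t = 1)
    (t₀ : ℝ) (ht₀ : t₀ ∈ I)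
    (hσ_ne : ∀ r, σ t₀ r ≠ 0)
    (hdyn : W' t₀ = -TN N (U t₀) (σ t₀) (V t₀) (gradℓ (W t₀)))
    (hU_stat : U' t₀ = 0) (hV_stat : V' t₀ = 0) :
    ∀ r r', r ≠ r' → ((U t₀)ᵀ * gradℓ (W t₀) * V t₀) r r' = 0 := by
  have hW'_svd : W' t₀ = U t₀ * diagonal (σ' t₀) * (V t₀)ᵀ := by
    ext p q
    have hSVD_near : (fun s => W s p q) =ᶠ[nhds t₀]
        fun s => (U s * diagonal (σ s) * (V s)ᵀ) p q := by
      filter_upwards [hI_open.mem_nhds ht₀] with s hs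
      rw [hSVD s hs]
    have hderiv := (hasDerivAt_mul_diagonal_mul_transpose_apply (hU t₀ ht₀) (hσ t₀ ht₀)
      (hV t₀ ht₀) p q).congr_of_eventuallyEq hSVD_near
    simpa [hU_stat, hV_stat] using (hW t₀ ht₀ p q).unique hderiv
  intro r r' hrr'
  have hentry := congrFun (congrFun
    (transpose_mul_mul_mul_transpose_mul (hUorth t₀ ht₀) (hVorth t₀ ht₀) (diagonal (σ' t₀))) r) r'
  rw [← hW'_svd, hdyn, Matrix.mul_neg, Matrix.neg_mul, Matrix.neg_apply,
    transpose_mul_TN_mul_apply (hUorth t₀ ht₀) (hVorth t₀ ht₀), diagonal_apply_ne _ hrr',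
    neg_eq_zero] at hentry
  exact (mul_eq_zero.mp hentry).resolve_right (tnWeight_pos N (σ t₀) (hσ_ne r) r').ne'

/-- Stationarity of singular vectors implies alignment with the gradient: along a
differentiable SVD path obeying the deep-factorization dynamics at `t₀`, with all
singular values nonzero at `t₀`, if `U′(t₀) = 0` and `V′(t₀) = 0` then
`U(t₀)ᵀ·∇ℓ(W(t₀))·V(t₀)` is diagonal. -/
theorem stmt14 {d d' : ℕ} (N : ℕ) (hN : 2 ≤ N)
    (ℓ : Matrix (Fin d) (Fin d') ℝ → ℝ)
    (gradℓ : Matrix (Fin d) (Fin d') ℝ → Matrix (Fin d) (Fin d') ℝ)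
    (hgrad : ∀ Wm H, HasDerivAt (fun s : ℝ => ℓ (Wm + s • H))
      (((gradℓ Wm)ᵀ * H).trace) 0)
    (I : Set ℝ) (hI_open : IsOpen I) (hI_conn : I.OrdConnected)
    (W W' : ℝ → Matrix (Fin d) (Fin d') ℝ)
    (U U' : ℝ → Matrix (Fin d) (Fin (min d d')) ℝ)
    (σ σ' : ℝ → Fin (min d d') → ℝ)
    (V V' : ℝ → Matrix (Fin d') (Fin (min d d')) ℝ)
    (hW : ∀ t ∈ I, ∀ p q, HasDerivAt (fun s => W s p q) (W' t p q) t)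
    (hU : ∀ t ∈ I, ∀ p q, HasDerivAt (fun s => U s p q) (U' t p q) t)
    (hσ : ∀ t ∈ I, ∀ r, HasDerivAt (fun s => σ s r) (σ' t r) t)
    (hV : ∀ t ∈ I, ∀ p q, HasDerivAt (fun s => V s p q) (V' t p q) t)
    (hSVD : ∀ t ∈ I, W t = U t * Matrix.diagonal (σ t) * (V t)ᵀ)
    (hUorth : ∀ t ∈ I, (U t)ᵀ * U t = 1)
    (hVorth : ∀ t ∈ I, (V t)ᵀ * V t = 1)
    (t₀ : ℝ) (ht₀ : t₀ ∈ I)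
    (hσ_ne : ∀ r, σ t₀ r ≠ 0)
    (hdyn : W' t₀ = -TN N (U t₀) (σ t₀) (V t₀) (gradℓ (W t₀)))
    (hU_stat : U' t₀ = 0) (hV_stat : V' t₀ = 0) :
    ∀ r r', r ≠ r' → ((U t₀)ᵀ * gradℓ (W t₀) * V t₀) r r' = 0 :=
  stmt14_general N gradℓ I hI_open W W' U U' σ σ' V V' hW hU hσ hV hSVD hUorth hVorth t₀ ht₀ hσ_ne
    hdyn hU_stat hV_stat
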